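/- Pathwise backlog decomposition: For all t ≥ 0 and x ≥ 0, H(A(t)) − H(A*(t)) ≤ sup_{0≤s≤t} [H(A(s,t)) − α(t−s)] + (α ⊘ β)(0) + sup_{0≤s≤t} [ (H(A) ⊗ [β]ˣ)(s) − H(A*(s)) ]. -/

import Mathlib

/-!
Insert the intermediate curve `(H(A) ⊗ [β]ˣ)(t)`. The difference `H(A(t)) − (H(A) ⊗ [β]ˣ)(t)`
is bounded term by term inside the infimum: for `0 ≤ s ≤ t` write
`H(A(s,t)) − [β]ˣ(t−s) ≤ (H(A(s,t)) − α(t−s)) + (α(t−s) − β(t−s))`, and the two brackets are at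
most the first supremum and `(α ⊘ β)(0)`. The remaining difference
`(H(A) ⊗ [β]ˣ)(t) − H(A*(t))` is the `s = t` term of the last supremum.
-/

open Set

/-- The `(min,+)` convolution `(f ⊗ g)(s) = inf_{0 ≤ u ≤ s} (f u + g (s - u))`. -/
noncomputable def minConv (f g : ℝ → ℝ) (s : ℝ) : ℝ :=
  sInf ((fun u => f u + g (s - u)) '' Set.Icc 0 s)

/-- The `(min,+)` deconvolution `(f ⊘ g)(τ) = sup_{v ≥ 0} (f (τ+v) - g v)`. -/
noncomputable def deconv (f g : ℝ → ℝ) (τ : ℝ) : ℝ :=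
  sSup ((fun v => f (τ + v) - g v) '' Set.Ici 0)

/-- The clipped curve `[β]ˣ(t) = max (β t) x`. -/
def clip (β : ℝ → ℝ) (x : ℝ) : ℝ → ℝ := fun t => max (β t) x

section MinPlus

variable {f g : ℝ → ℝ}

theorem minConv_le {a b s u : ℝ} (hf : ∀ u, a ≤ f u) (hg : ∀ v, b ≤ g v) (hu : u ∈ Icc 0 s) :
    minConv f g s ≤ f u + g (s - u) :=
  csInf_le ⟨a + b, by rintro _ ⟨v, -, rfl⟩; exact add_le_add (hf v) (hg _)⟩ ⟨u, hu, rfl⟩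

theorem le_minConv {c s : ℝ} (hs : 0 ≤ s) (h : ∀ u ∈ Icc 0 s, c ≤ f u + g (s - u)) :
    c ≤ minConv f g s :=
  le_csInf ⟨_, 0, ⟨le_rfl, hs⟩, rfl⟩ (by rintro _ ⟨u, hu, rfl⟩; exact h u hu)

theorem sub_le_deconv {τ v : ℝ} (h : BddAbove ((fun v => f (τ + v) - g v) '' Ici 0))
    (hv : 0 ≤ v) : f (τ + v) - g v ≤ deconv f g τ :=
  le_csSup h ⟨v, hv, rfl⟩

theorem le_clip (β : ℝ → ℝ) (x t : ℝ) : β t ≤ clip β x t :=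
  le_max_left _ _

theorem right_le_clip (β : ℝ → ℝ) (x t : ℝ) : x ≤ clip β x t :=
  le_max_right _ _

theorem Monotone.clip {β : ℝ → ℝ} (hβ : Monotone β) (x : ℝ) : Monotone (clip β x) :=
  hβ.max monotone_const

end MinPlus

section Backlog

variable {f : ℝ → ℝ} {t : ℝ}

theorem sub_minConv_le_sSup_add_deconv {g α β : ℝ → ℝ} (ht : 0 ≤ t) (hβg : ∀ v, β v ≤ g v)
    (hinc : BddAbove ((fun s => (f t - f s) - α (t - s)) '' Icc 0 t))
    (hdec : BddAbove ((fun v => α (0 + v) - β v) '' Ici 0)) :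
    f t - minConv f g t ≤
      sSup ((fun s => (f t - f s) - α (t - s)) '' Icc 0 t) + deconv α β 0 := by
  rw [sub_le_comm]
  refine le_minConv ht fun u hu => ?_
  have hinc_u : (f t - f u) - α (t - u) ≤ sSup ((fun s => (f t - f s) - α (t - s)) '' Icc 0 t) :=
    le_csSup hinc ⟨u, hu, rfl⟩
  have hdec_u : α (0 + (t - u)) - β (t - u) ≤ deconv α β 0 :=
    sub_le_deconv hdec (sub_nonneg.2 hu.2)
  rw [zero_add] at hdec_u
  linarith [hβg (t - u)]

theorem bddAbove_increment_sub {α : ℝ → ℝ} (hf : Monotone f) (hα : ∀ s, 0 ≤ α s) :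
    BddAbove ((fun s => (f t - f s) - α (t - s)) '' Icc 0 t) := by
  refine ⟨f t - f 0, ?_⟩
  rintro _ ⟨s, hs, rfl⟩
  linarith [hf hs.1, hα (t - s)]

theorem bddAbove_minConv_clip_sub {h β : ℝ → ℝ} {x : ℝ} (hf : ∀ u, 0 ≤ f u) (hβ : Monotone β)
    (hh : ∀ s, 0 ≤ h s) : BddAbove ((fun s => minConv f (clip β x) s - h s) '' Icc 0 t) := by
  refine ⟨f 0 + clip β x t, ?_⟩
  rintro _ ⟨s, hs, rfl⟩
  have hconv : minConv f (clip β x) s ≤ f 0 + clip β x (s - 0) :=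
    minConv_le hf (right_le_clip β x) ⟨le_rfl, hs.1⟩
  rw [sub_zero] at hconv
  linarith [hβ.clip x hs.2, hh s]

end Backlog

theorem stmt13_general (HA HAs : ℝ → ℝ) (α β : ℝ → ℝ) (x t : ℝ) (ht : 0 ≤ t)
    (hHA : Monotone HA)
    (hHAn : ∀ s, 0 ≤ HA s) (hHAsn : ∀ s, 0 ≤ HAs s)
    (hβ : Monotone β) (hαn : ∀ s, 0 ≤ α s)
    (hdeconv : BddAbove ((fun v => α (0 + v) - β v) '' Set.Ici 0)) :
    HA t - HAs t ≤
      sSup ((fun s => (HA t - HA s) - α (t - s)) '' Set.Icc 0 t) + deconv α β 0 +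
      sSup ((fun s => minConv HA (clip β x) s - HAs s) '' Set.Icc 0 t) := by
  have arrival_part := sub_minConv_le_sSup_add_deconv ht (le_clip β x)
    (bddAbove_increment_sub hHA hαn) hdeconv
  have service_part : minConv HA (clip β x) t - HAs t ≤
      sSup ((fun s => minConv HA (clip β x) s - HAs s) '' Icc 0 t) :=
    le_csSup (bddAbove_minConv_clip_sub hHAn hβ hHAsn) ⟨t, ⟨ht, le_rfl⟩, rfl⟩
  linarith

/-- Pathwise backlog decomposition. -/
theorem stmt13 (HA HAs : ℝ → ℝ) (α β : ℝ → ℝ) (x t : ℝ) (hx : 0 ≤ x) (ht : 0 ≤ t)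
    (hHA : Monotone HA) (hHAs : Monotone HAs)
    (hHAn : ∀ s, 0 ≤ HA s) (hHAsn : ∀ s, 0 ≤ HAs s)
    (hα : Monotone α) (hβ : Monotone β) (hαn : ∀ s, 0 ≤ α s) (hβn : ∀ s, 0 ≤ β s)
    (hdeconv : BddAbove ((fun v => α (0 + v) - β v) '' Set.Ici 0)) :
    HA t - HAs t ≤
      sSup ((fun s => (HA t - HA s) - α (t - s)) '' Set.Icc 0 t) + deconv α β 0 +
      sSup ((fun s => minConv HA (clip β x) s - HAs s) '' Set.Icc 0 t) :=
  stmt13_general HA HAs α β x t ht hHA hHAn hHAsn hβ hαn hdeconv
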